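/- arXiv:2304.02743 — 7 statements merged into one kernel-verified Lean document; each statement's English description precedes it below -/
import Mathlib

section
/- The function r(X) = min over A ⊆ E of (ρ(A) + |X − X_A|) is the rank function of a matroid on X_E; that is, r is normalized (r(∅)=0), satisfies r(X) ≤ |X|, is monotone, and is submodular. -/
/-- A polymatroid rank function on ground set `E`: normalized, monotone, and submodular. -/
structure IsPolymatroid {α : Type*} [DecidableEq α] (E : Finset α) (ρ : Finset α → ℕ) : Prop where
  normalized : ρ ∅ = 0
  monotone : ∀ A B : Finset α, A ⊆ B → B ⊆ E → ρ A ≤ ρ B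
  submodular : ∀ A B : Finset α, A ⊆ E → B ⊆ E → ρ (A ∪ B) + ρ (A ∩ B) ≤ ρ A + ρ B

/-- The rank function of the `k`-natural matroid `M_ρ^k` on `X_E = ⋃ e ∈ E, X e`:
`r(Y) = min { ρ(A) + |Y \ X_A| : A ⊆ E }`. -/
def natRank {α β : Type*} [DecidableEq α] [DecidableEq β] (E : Finset α) (ρ : Finset α → ℕ)
    (X : α → Finset β) (Y : Finset β) : ℕ :=
  (E.powerset.image fun A => ρ A + (Y \ A.biUnion X).card).min'
    ((E.powerset_nonempty).image _)

/-- A matroid rank function on ground set `G`. -/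
structure IsMatroidRank {β : Type*} [DecidableEq β] (G : Finset β) (r : Finset β → ℕ) : Prop where
  normalized : r ∅ = 0
  le_card : ∀ Y : Finset β, Y ⊆ G → r Y ≤ Y.card
  monotone : ∀ A B : Finset β, A ⊆ B → B ⊆ G → r A ≤ r B
  submodular : ∀ A B : Finset β, A ⊆ G → B ⊆ G → r (A ∪ B) + r (A ∩ B) ≤ r A + r B

lemma natRank_le {α β : Type*} [DecidableEq α] [DecidableEq β] (E : Finset α) (ρ : Finset α → ℕ)
    (X : α → Finset β) (Y : Finset β) (A : Finset α) (hA : A ⊆ E) :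
    natRank E ρ X Y ≤ ρ A + (Y \ A.biUnion X).card :=
  Finset.min'_le _ _ (Finset.mem_image_of_mem _ (Finset.mem_powerset.2 hA))

lemma natRank_exists {α β : Type*} [DecidableEq α] [DecidableEq β] (E : Finset α)
    (ρ : Finset α → ℕ) (X : α → Finset β) (Y : Finset β) :
    ∃ A ⊆ E, natRank E ρ X Y = ρ A + (Y \ A.biUnion X).card := by
  have hm := Finset.min'_mem (E.powerset.image fun A => ρ A + (Y \ A.biUnion X).card)
    ((E.powerset_nonempty).image _)
  rw [Finset.mem_image] at hm
  obtain ⟨A, hA, hAe⟩ := hm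
  exact ⟨A, Finset.mem_powerset.1 hA, hAe.symm⟩

/-- The function `r(Y) = min { ρ(A) + |Y \ X_A| : A ⊆ E }` is the rank function of a
matroid on `X_E`: normalized, bounded by cardinality, monotone, and submodular. -/
theorem natRank_isMatroidRank {α β : Type*} [DecidableEq α] [DecidableEq β] (k : ℕ)
    (E : Finset α) (ρ : Finset α → ℕ) (h : IsPolymatroid E ρ)
    (X : α → Finset β) (hcard : ∀ e ∈ E, (X e).card = k)
    (hdisjX : ∀ e ∈ E, ∀ f ∈ E, e ≠ f → Disjoint (X e) (X f)) :
    IsMatroidRank (E.biUnion X) (natRank E ρ X) := by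
  constructor
  · have h1 := natRank_le E ρ X ∅ ∅ (Finset.empty_subset E)
    simpa [h.normalized] using h1
  · intro Y _
    have h1 := natRank_le E ρ X Y ∅ (Finset.empty_subset E)
    simpa [h.normalized] using h1
  · intro Y Z hYZ _
    obtain ⟨A, hA, hAe⟩ := natRank_exists E ρ X Z
    calc natRank E ρ X Y ≤ ρ A + (Y \ A.biUnion X).card := natRank_le E ρ X Y A hA
      _ ≤ ρ A + (Z \ A.biUnion X).card := by
          gcongr
      _ = natRank E ρ X Z := hAe.symm
  · intro Y Z _ _
    obtain ⟨A, hA, hAe⟩ := natRank_exists E ρ X Y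
    obtain ⟨B, hB, hBe⟩ := natRank_exists E ρ X Z
    set S := A.biUnion X with hS
    set T := B.biUnion X with hT
    have hXun : (A ∪ B).biUnion X = S ∪ T := by ext x; simp [hS, hT, Finset.mem_biUnion, or_and_right, exists_or]
    have hXint : (A ∩ B).biUnion X = S ∩ T := by
      apply Finset.Subset.antisymm
      · intro x hx
        simp only [hS, hT, Finset.mem_biUnion, Finset.mem_inter] at *
        obtain ⟨e, ⟨heA, heB⟩, hxe⟩ := hx
        exact ⟨⟨e, heA, hxe⟩, ⟨e, heB, hxe⟩⟩
      · intro x hx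
        simp only [hS, hT, Finset.mem_inter, Finset.mem_biUnion] at *
        obtain ⟨⟨e, heA, hxe⟩, ⟨f, hfB, hxf⟩⟩ := hx
        have hef : e = f := by
          by_contra hne
          exact Finset.disjoint_left.1 (hdisjX e (hA heA) f (hB hfB) hne) hxe hxf
        subst hef
        exact ⟨e, ⟨heA, hfB⟩, hxe⟩
    have key : ((Y ∪ Z) \ (S ∪ T)).card + ((Y ∩ Z) \ (S ∩ T)).card
        ≤ (Y \ S).card + (Z \ T).card := by
      set P := (Y ∪ Z) \ (S ∪ T)
      set Q := (Y ∩ Z) \ (S ∩ T)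
      have h1 : P ∪ Q ⊆ (Y \ S) ∪ (Z \ T) := by
        intro x hx
        simp only [P, Q, Finset.mem_union, Finset.mem_sdiff, Finset.mem_inter, not_or,
          not_and] at *
        tauto
      have h2 : P ∩ Q ⊆ (Y \ S) ∩ (Z \ T) := by
        intro x hx
        simp only [P, Q, Finset.mem_union, Finset.mem_sdiff, Finset.mem_inter, not_or,
          not_and] at *
        tauto
      calc P.card + Q.card = (P ∪ Q).card + (P ∩ Q).card :=
            (Finset.card_union_add_card_inter P Q).symm
        _ ≤ ((Y \ S) ∪ (Z \ T)).card + ((Y \ S) ∩ (Z \ T)).card := by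
            exact Nat.add_le_add (Finset.card_le_card h1) (Finset.card_le_card h2)
        _ = (Y \ S).card + (Z \ T).card := Finset.card_union_add_card_inter _ _
    have hu := natRank_le E ρ X (Y ∪ Z) (A ∪ B) (Finset.union_subset hA hB)
    have hi := natRank_le E ρ X (Y ∩ Z) (A ∩ B)
      (Finset.Subset.trans (Finset.inter_subset_left) hA)
    rw [hXun] at hu
    rw [hXint] at hi
    have hsub := h.submodular A B hA hB
    omega
end

section
/- For the k-natural matroid M_ρ^k = (X_E, r) of a polymatroid (E,ρ), we have r(X_A) = ρ(A) for every A ⊆ E, provided ρ is a k-polymatroid (i.e., ρ({e}) ≤ k for all e ∈ E). -/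
lemma union_rank_le {α : Type*} [DecidableEq α] (k : ℕ) (E : Finset α) (ρ : Finset α → ℕ)
    (h : IsPolymatroid E ρ) (hk : ∀ e ∈ E, ρ {e} ≤ k) :
    ∀ s : Finset α, s ⊆ E → ∀ B : Finset α, B ⊆ E → ρ (B ∪ s) ≤ ρ B + k * s.card := by
  intro s
  induction s using Finset.induction_on with
  | empty => intro _ B hB; simp
  | @insert e s he ih =>
    intro hsE B hB
    have heE : e ∈ E := hsE (Finset.mem_insert_self e s)
    have hsE' : s ⊆ E := fun x hx => hsE (Finset.mem_insert_of_mem hx)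
    have hBs : B ∪ s ⊆ E := Finset.union_subset hB hsE'
    have hsub := h.submodular (B ∪ s) {e} hBs (by simpa using heE)
    have h1 : ρ (B ∪ s ∪ {e}) ≤ ρ (B ∪ s) + ρ {e} := le_trans (Nat.le_add_right _ _) hsub
    have h2 : B ∪ insert e s = B ∪ s ∪ {e} := by
      ext x; simp [Finset.mem_insert, Finset.mem_union, or_comm, or_assoc, or_left_comm]
    rw [h2, Finset.card_insert_of_notMem he]
    calc ρ (B ∪ s ∪ {e}) ≤ ρ (B ∪ s) + ρ {e} := h1
      _ ≤ (ρ B + k * s.card) + k := Nat.add_le_add (ih hsE' B hB) (hk e heE)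
      _ = ρ B + k * (s.card + 1) := by ring

/-- For a `k`-polymatroid `ρ`, the `k`-natural matroid satisfies `r(X_A) = ρ(A)` for all
`A ⊆ E`. -/
theorem natRank_biUnion {α β : Type*} [DecidableEq α] [DecidableEq β] (k : ℕ)
    (E : Finset α) (ρ : Finset α → ℕ) (h : IsPolymatroid E ρ)
    (hk : ∀ e ∈ E, ρ {e} ≤ k)
    (X : α → Finset β) (hcard : ∀ e ∈ E, (X e).card = k)
    (hdisjX : ∀ e ∈ E, ∀ f ∈ E, e ≠ f → Disjoint (X e) (X f)) :
    ∀ A ⊆ E, natRank E ρ X (A.biUnion X) = ρ A := by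
  intro A hA
  apply le_antisymm
  · -- min ≤ value at A
    apply Finset.min'_le
    refine Finset.mem_image.2 ⟨A, Finset.mem_powerset.2 hA, ?_⟩
    simp
  · -- ρ A ≤ every term
    apply Finset.le_min'
    intro y hy
    obtain ⟨B, hB, rfl⟩ := Finset.mem_image.1 hy
    rw [Finset.mem_powerset] at hB
    -- X_{A\B} ⊆ X_A \ X_B
    have hsub : (A \ B).biUnion X ⊆ A.biUnion X \ B.biUnion X := by
      intro x hx
      obtain ⟨e, he, hxe⟩ := Finset.mem_biUnion.1 hx
      have heA : e ∈ A := (Finset.mem_sdiff.1 he).1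
      have heB : e ∉ B := (Finset.mem_sdiff.1 he).2
      refine Finset.mem_sdiff.2 ⟨Finset.mem_biUnion.2 ⟨e, heA, hxe⟩, ?_⟩
      intro hxB
      obtain ⟨f, hf, hxf⟩ := Finset.mem_biUnion.1 hxB
      have hef : e ≠ f := fun hh => heB (hh ▸ hf)
      exact absurd ((hdisjX e (hA heA) f (hB hf) hef).le_bot (Finset.mem_inter.2 ⟨hxe, hxf⟩)) (by simp)
    have hcardAB : ((A \ B).biUnion X).card = k * (A \ B).card := by
      rw [Finset.card_biUnion]
      · rw [Finset.sum_congr rfl fun e he => hcard e (hA (Finset.mem_sdiff.1 he).1)]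
        simp [Nat.mul_comm]
      · intro e he f hf hef
        exact hdisjX e (hA (Finset.mem_sdiff.1 he).1) f (hA (Finset.mem_sdiff.1 hf).1) hef
    have key : ρ A ≤ ρ B + k * (A \ B).card := by
      have h1 : ρ A ≤ ρ (B ∪ (A \ B)) := by
        apply h.monotone
        · intro x hx
          by_cases hxB : x ∈ B
          · exact Finset.mem_union_left _ hxB
          · exact Finset.mem_union_right _ (Finset.mem_sdiff.2 ⟨hx, hxB⟩)
        · exact Finset.union_subset hB (le_trans (Finset.sdiff_subset) hA)
      exact le_trans h1 (union_rank_le k E ρ h hk _ (le_trans Finset.sdiff_subset hA) B hB)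
    calc ρ A ≤ ρ B + k * (A \ B).card := key
      _ = ρ B + ((A \ B).biUnion X).card := by rw [hcardAB]
      _ ≤ ρ B + (A.biUnion X \ B.biUnion X).card := Nat.add_le_add_left (Finset.card_le_card hsub) _
end

section
/- A matroid M on X_E equals the k-natural matroid M_ρ^k if and only if each set X_e is a set of clones in M and r_M(X_A) = ρ(A) for all A ⊆ E. -/
namespace NatRankAux

variable {α β : Type*} [DecidableEq α] [DecidableEq β]

lemma natRank_le (E : Finset α) (ρ : Finset α → ℕ) (X : α → Finset β) (Y : Finset β)
    {A : Finset α} (hA : A ⊆ E) :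
    natRank E ρ X Y ≤ ρ A + (Y \ A.biUnion X).card :=
  Finset.min'_le _ _ (Finset.mem_image.2 ⟨A, Finset.mem_powerset.2 hA, rfl⟩)

lemma natRank_spec (E : Finset α) (ρ : Finset α → ℕ) (X : α → Finset β) (Y : Finset β) :
    ∃ A ⊆ E, natRank E ρ X Y = ρ A + (Y \ A.biUnion X).card := by
  have := Finset.min'_mem (E.powerset.image fun A => ρ A + (Y \ A.biUnion X).card)
    ((E.powerset_nonempty).image _)
  rw [Finset.mem_image] at this
  obtain ⟨A, hA, hAe⟩ := this
  exact ⟨A, Finset.mem_powerset.1 hA, hAe.symm⟩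

variable {G : Finset β} {rM : Finset β → ℕ}

lemma rank_insert_le (hM : IsMatroidRank G rM) {W : Finset β} (hW : W ⊆ G) {z : β}
    (hz : z ∈ G) : rM (insert z W) ≤ rM W + 1 := by
  have h1 := hM.submodular W {z} hW (by simpa using hz)
  have h2 : rM {z} ≤ 1 := by simpa using hM.le_card {z} (by simpa using hz)
  rw [Finset.union_comm, ← Finset.insert_eq] at h1
  omega

lemma rank_union_le (hM : IsMatroidRank G rM) {W T : Finset β} (hW : W ⊆ G) (hT : T ⊆ G) :
    rM (W ∪ T) ≤ rM W + (T \ W).card := by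
  classical
  have key : ∀ T : Finset β, T ⊆ G → rM (W ∪ T) ≤ rM W + T.card := by
    intro T
    induction T using Finset.induction_on with
    | empty => intro _; simp
    | @insert a T ha ih =>
      intro hsub
      have haG : a ∈ G := hsub (Finset.mem_insert_self a T)
      have hTG : T ⊆ G := (Finset.subset_insert a T).trans hsub
      have h1 : rM (W ∪ insert a T) ≤ rM (W ∪ T) + 1 := by
        rw [Finset.union_insert]
        exact rank_insert_le hM (Finset.union_subset hW hTG) haG
      have h2 := ih hTG
      rw [Finset.card_insert_of_notMem ha]
      omega
  calc rM (W ∪ T) = rM (W ∪ (T \ W)) := by rw [Finset.union_sdiff_self_eq_union]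
    _ ≤ rM W + (T \ W).card := key _ ((Finset.sdiff_subset).trans hT)

lemma rank_insert_of_cl (hM : IsMatroidRank G rM) {Z W : Finset β} (hZW : Z ⊆ W)
    (hW : W ⊆ G) {y : β} (hy : y ∈ G) (hy2 : rM (insert y Z) = rM Z) :
    rM (insert y W) = rM W := by
  refine le_antisymm ?_ (hM.monotone _ _ (Finset.subset_insert y W)
    (Finset.insert_subset hy hW))
  have hZG : Z ⊆ G := hZW.trans hW
  have h1 := hM.submodular W (insert y Z) hW (Finset.insert_subset hy hZG)
  have e1 : W ∪ insert y Z = insert y W := by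
    rw [Finset.union_insert, Finset.union_eq_left.2 hZW]
  have h2 : rM Z ≤ rM (W ∩ insert y Z) := by
    refine hM.monotone _ _ ?_ ((Finset.inter_subset_left).trans hW)
    exact Finset.subset_inter hZW (Finset.subset_insert y Z)
  rw [e1] at h1
  omega

lemma rank_union_of_cl (hM : IsMatroidRank G rM) {W T : Finset β} (hW : W ⊆ G) (hT : T ⊆ G)
    (hall : ∀ y ∈ T, rM (insert y W) = rM W) : rM (W ∪ T) = rM W := by
  classical
  induction T using Finset.induction_on with
  | empty => simp
  | @insert a T ha ih =>
    have haG : a ∈ G := hT (Finset.mem_insert_self a T)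
    have hTG : T ⊆ G := (Finset.subset_insert a T).trans hT
    have hWT : rM (W ∪ T) = rM W := ih hTG (fun y hy => hall y (Finset.mem_insert_of_mem hy))
    have ha' : rM (insert a W) = rM W := hall a (Finset.mem_insert_self a T)
    rw [Finset.union_insert,
      rank_insert_of_cl hM Finset.subset_union_left (Finset.union_subset hW hTG) haG
        (by rw [ha'])]
    exact hWT

lemma rho_union_le {E : Finset α} {ρ : Finset α → ℕ} (h : IsPolymatroid E ρ) {k : ℕ}
    (hk : ∀ e ∈ E, ρ {e} ≤ k) {B : Finset α} (hB : B ⊆ E) :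
    ∀ A, A ⊆ E → ρ (A ∪ B) ≤ ρ B + k * (A \ B).card := by
  classical
  intro A
  induction A using Finset.induction_on with
  | empty => intro _; simp
  | @insert a A ha ih =>
    intro hsub
    have haE : a ∈ E := hsub (Finset.mem_insert_self a A)
    have hAE : A ⊆ E := (Finset.subset_insert a A).trans hsub
    by_cases hab : a ∈ B
    · have e1 : insert a A ∪ B = A ∪ B := by
        rw [Finset.insert_union, Finset.insert_eq_self.2 (Finset.mem_union_right A hab)]
      have e2 : insert a A \ B = A \ B := Finset.insert_sdiff_of_mem A hab
      rw [e1, e2]; exact ih hAE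
    · have h1 := h.submodular (A ∪ B) {a} (Finset.union_subset hAE hB) (by simpa using haE)
      have e1 : insert a A ∪ B = (A ∪ B) ∪ {a} := by
        rw [Finset.union_comm _ ({a} : Finset α), ← Finset.insert_eq, Finset.insert_union]
      have e2 : insert a A \ B = insert a (A \ B) :=
        Finset.insert_sdiff_of_notMem A hab
      have e3 : (insert a (A \ B)).card = (A \ B).card + 1 :=
        Finset.card_insert_of_notMem (fun hc => ha (Finset.mem_sdiff.1 hc).1)
      have h2 := ih hAE
      have h3 := hk a haE
      rw [e1, e2, e3]
      have : k * ((A \ B).card + 1) = k * (A \ B).card + k := by ring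
      omega

end NatRankAux

/-- A matroid `M` on `X_E` is the `k`-natural matroid `M_ρ^k` if and only if each `X_e` is
a set of clones in `M` and `r_M(X_A) = ρ(A)` for all `A ⊆ E`. -/
theorem eq_natRank_iff {α β : Type*} [DecidableEq α] [DecidableEq β] (k : ℕ)
    (E : Finset α) (ρ : Finset α → ℕ) (h : IsPolymatroid E ρ)
    (hk : ∀ e ∈ E, ρ {e} ≤ k)
    (X : α → Finset β) (hcard : ∀ e ∈ E, (X e).card = k)
    (hdisjX : ∀ e ∈ E, ∀ f ∈ E, e ≠ f → Disjoint (X e) (X f))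
    (rM : Finset β → ℕ) (hM : IsMatroidRank (E.biUnion X) rM) :
    (∀ Y ⊆ E.biUnion X, rM Y = natRank E ρ X Y) ↔
      ((∀ e ∈ E, ∀ x ∈ X e, ∀ y ∈ X e,
          ∀ Y ⊆ E.biUnion X, rM (Y.image (Equiv.swap x y)) = rM Y) ∧
        ∀ A ⊆ E, rM (A.biUnion X) = ρ A) := by
  classical
  open NatRankAux in
  set G := E.biUnion X with hG
  have hXsub : ∀ {A : Finset α}, A ⊆ E → A.biUnion X ⊆ G := fun {A} hA =>
    Finset.biUnion_subset_biUnion_of_subset_left X hA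
  -- membership of X e elements in X_B is governed by e ∈ B
  have hmemXB : ∀ {e : α}, e ∈ E → ∀ {B : Finset α}, B ⊆ E → ∀ {w : β}, w ∈ X e →
      (w ∈ B.biUnion X ↔ e ∈ B) := by
    intro e he B hB w hw
    constructor
    · intro hwB
      obtain ⟨f, hf, hwf⟩ := Finset.mem_biUnion.1 hwB
      by_contra hne
      have : e ≠ f := fun hef => hne (hef ▸ hf)
      exact (Finset.disjoint_left.1 (hdisjX e he f (hB hf) this) hw) hwf
    · intro heB
      exact Finset.mem_biUnion.2 ⟨e, heB, hw⟩
  constructor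
  · -- forward direction
    intro H
    constructor
    · -- clones
      intro e he x hx y hy Y hY
      set σ := Equiv.swap x y with hσ
      have hxG : x ∈ G := Finset.mem_biUnion.2 ⟨e, he, hx⟩
      have hyG : y ∈ G := Finset.mem_biUnion.2 ⟨e, he, hy⟩
      have hσG : ∀ z ∈ G, σ z ∈ G := by
        intro z hz
        rcases eq_or_ne z x with rfl | hzx
        · simpa [hσ, Equiv.swap_apply_left] using hyG
        rcases eq_or_ne z y with rfl | hzy
        · simpa [hσ, Equiv.swap_apply_right] using hxG
        · simpa [hσ, Equiv.swap_apply_of_ne_of_ne hzx hzy] using hz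
      have hYσ : Y.image σ ⊆ G := by
        intro z hz
        obtain ⟨w, hw, rfl⟩ := Finset.mem_image.1 hz
        exact hσG w (hY hw)
      -- swap preserves membership in X_B for B ⊆ E
      have hswapXB : ∀ {B : Finset α}, B ⊆ E → ∀ z, (σ z ∈ B.biUnion X ↔ z ∈ B.biUnion X) := by
        intro B hB z
        rcases eq_or_ne z x with rfl | hzx
        · rw [hσ, Equiv.swap_apply_left, hmemXB he hB hy, hmemXB he hB hx]
        rcases eq_or_ne z y with rfl | hzy
        · rw [hσ, Equiv.swap_apply_right, hmemXB he hB hx, hmemXB he hB hy]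
        · rw [hσ, Equiv.swap_apply_of_ne_of_ne hzx hzy]
      have hcardeq : ∀ {B : Finset α}, B ⊆ E →
          (Y.image σ \ B.biUnion X).card = (Y \ B.biUnion X).card := by
        intro B hB
        have himg : Y.image σ \ B.biUnion X = (Y \ B.biUnion X).image σ := by
          ext z
          simp only [Finset.mem_sdiff, Finset.mem_image]
          constructor
          · rintro ⟨⟨w, hw, rfl⟩, hz⟩
            exact ⟨w, ⟨hw, fun hc => hz ((hswapXB hB w).2 hc)⟩, rfl⟩
          · rintro ⟨w, ⟨hw, hwB⟩, rfl⟩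
            exact ⟨⟨w, hw, rfl⟩, fun hc => hwB ((hswapXB hB w).1 hc)⟩
        rw [himg, Finset.card_image_of_injective _ σ.injective]
      rw [H Y hY, H (Y.image σ) hYσ]
      apply le_antisymm
      · obtain ⟨B, hB, hBe⟩ := natRank_spec E ρ X Y
        rw [hBe, ← hcardeq hB]
        exact natRank_le E ρ X _ hB
      · obtain ⟨B, hB, hBe⟩ := natRank_spec E ρ X (Y.image σ)
        rw [hBe, hcardeq hB]
        exact natRank_le E ρ X _ hB
    · -- rank of X_A equals ρ A
      intro A hA
      rw [H (A.biUnion X) (hXsub hA)]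
      apply le_antisymm
      · have := natRank_le E ρ X (A.biUnion X) hA
        simpa using this
      · obtain ⟨B, hB, hBe⟩ := natRank_spec E ρ X (A.biUnion X)
        rw [hBe]
        have h1 : ρ A ≤ ρ (A ∪ B) :=
          h.monotone A (A ∪ B) Finset.subset_union_left (Finset.union_subset hA hB)
        have h2 : ρ (A ∪ B) ≤ ρ B + k * (A \ B).card := rho_union_le h hk hB A hA
        have h3 : k * (A \ B).card ≤ (A.biUnion X \ B.biUnion X).card := by
          have hsub2 : (A \ B).biUnion X ⊆ A.biUnion X \ B.biUnion X := by
            intro z hz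
            obtain ⟨f, hf, hzf⟩ := Finset.mem_biUnion.1 hz
            have hfAB := Finset.mem_sdiff.1 hf
            refine Finset.mem_sdiff.2 ⟨Finset.mem_biUnion.2 ⟨f, hfAB.1, hzf⟩, ?_⟩
            rw [hmemXB (hA hfAB.1) hB hzf]
            exact hfAB.2
          have hc : ((A \ B).biUnion X).card = k * (A \ B).card := by
            rw [Finset.card_biUnion (fun e' he' f' hf' hne =>
              hdisjX e' (hA (Finset.mem_sdiff.1 he').1) f' (hA (Finset.mem_sdiff.1 hf').1) hne)]
            rw [Finset.sum_congr rfl (fun e' he' => hcard e' (hA (Finset.mem_sdiff.1 he').1))]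
            rw [Finset.sum_const, smul_eq_mul, mul_comm]
          rw [← hc]
          exact Finset.card_le_card hsub2
        omega
  · -- backward direction
    rintro ⟨hclone, hrank⟩ Y hY
    apply le_antisymm
    · -- rM Y ≤ natRank Y
      obtain ⟨A, hA, hAe⟩ := natRank_spec E ρ X Y
      rw [hAe]
      calc rM Y ≤ rM (A.biUnion X ∪ Y) :=
            hM.monotone _ _ Finset.subset_union_right (Finset.union_subset (hXsub hA) hY)
        _ ≤ rM (A.biUnion X) + (Y \ A.biUnion X).card := rank_union_le hM (hXsub hA) hY
        _ = ρ A + (Y \ A.biUnion X).card := by rw [hrank A hA]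
    · -- natRank Y ≤ rM Y
      set A := E.filter (fun e => rM (Y ∪ X e) = rM Y) with hAdef
      have hA : A ⊆ E := Finset.filter_subset _ _
      have hXA : A.biUnion X ⊆ G := hXsub hA
      -- step 1 : rM (Y ∪ X_A) = rM Y
      have step1 : rM (Y ∪ A.biUnion X) = rM Y := by
        apply rank_union_of_cl hM hY hXA
        intro z hz
        obtain ⟨e, he, hze⟩ := Finset.mem_biUnion.1 hz
        have heE : e ∈ E := hA he
        have hzG : z ∈ G := hXA hz
        apply le_antisymm
        · calc rM (insert z Y) ≤ rM (Y ∪ X e) := by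
                refine hM.monotone _ _ ?_ (Finset.union_subset hY (Finset.subset_biUnion_of_mem X heE))
                exact Finset.insert_subset (Finset.mem_union_right Y hze) Finset.subset_union_left
            _ = rM Y := (Finset.mem_filter.1 he).2
        · exact hM.monotone _ _ (Finset.subset_insert z Y) (Finset.insert_subset hzG hY)
      -- step 2 : independence of Y \ X_A over X_A
      have step2 : ∀ S, S ⊆ Y \ A.biUnion X → rM (A.biUnion X ∪ S) = ρ A + S.card := by
        intro S
        induction S using Finset.induction_on with
        | empty => intro _; simpa using hrank A hA
        | @insert a S ha ih =>
          intro hsub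
          have haY : a ∈ Y \ A.biUnion X := hsub (Finset.mem_insert_self a S)
          have hSsub : S ⊆ Y \ A.biUnion X := (Finset.subset_insert a S).trans hsub
          have hSG : S ⊆ G := (hSsub.trans Finset.sdiff_subset).trans hY
          have haG : a ∈ G := hY (Finset.mem_sdiff.1 haY).1
          set Z := A.biUnion X ∪ S with hZdef
          have hZG : Z ⊆ G := Finset.union_subset hXA hSG
          have hZval : rM Z = ρ A + S.card := ih hSsub
          have haZ : a ∉ Z := by
            rw [hZdef, Finset.mem_union]
            push_neg
            exact ⟨(Finset.mem_sdiff.1 haY).2, ha⟩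
          -- the key: rM (insert a Z) = rM Z + 1
          have hle : rM (insert a Z) ≤ rM Z + 1 := rank_insert_le hM hZG haG
          have hge : rM Z ≤ rM (insert a Z) :=
            hM.monotone _ _ (Finset.subset_insert a Z) (Finset.insert_subset haG hZG)
          have hkey : rM (insert a Z) = rM Z + 1 := by
            by_contra hc
            have hc' : rM (insert a Z) = rM Z := by omega
            -- a ∈ X f for some f ∈ E, f ∉ A
            obtain ⟨f, hf, haf⟩ := Finset.mem_biUnion.1 haG
            have hfA : f ∉ A := fun hfA =>
              (Finset.mem_sdiff.1 haY).2 (Finset.mem_biUnion.2 ⟨f, hfA, haf⟩)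
            have hXfG : X f ⊆ G := Finset.subset_biUnion_of_mem X hf
            -- all of X f is in the closure of Z
            have hallf : ∀ w ∈ X f, rM (insert w Z) = rM Z := by
              intro w hw
              by_cases hwZ : w ∈ Z
              · rw [Finset.insert_eq_self.2 hwZ]
              rcases eq_or_ne w a with rfl | hwa
              · exact hc'
              -- use the clone swap
              have hsw := hclone f hf a haf w hw (insert a Z)
                (Finset.insert_subset haG hZG)
              have himg : (insert a Z).image (Equiv.swap a w) = insert w Z := by
                rw [Finset.image_insert, Equiv.swap_apply_left]
                congr 1
                rw [Finset.image_congr (g := id), Finset.image_id]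
                intro z hz
                exact Equiv.swap_apply_of_ne_of_ne
                  (fun hza => haZ (hza ▸ hz)) (fun hzw => hwZ (hzw ▸ hz))
              rw [himg] at hsw
              rw [hsw, hc']
            -- lift the closure to Y ∪ X_A
            have hZsub : Z ⊆ Y ∪ A.biUnion X := by
              rw [hZdef, Finset.union_comm]
              exact Finset.union_subset_union_left (hSsub.trans Finset.sdiff_subset)
            have hWG : Y ∪ A.biUnion X ⊆ G := Finset.union_subset hY hXA
            have hallf2 : ∀ w ∈ X f, rM (insert w (Y ∪ A.biUnion X)) = rM (Y ∪ A.biUnion X) :=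
              fun w hw => rank_insert_of_cl hM hZsub hWG (hXfG hw) (hallf w hw)
            have hUf : rM ((Y ∪ A.biUnion X) ∪ X f) = rM (Y ∪ A.biUnion X) :=
              rank_union_of_cl hM hWG hXfG hallf2
            -- so rM (Y ∪ X f) = rM Y, hence f ∈ A, contradiction
            have hYf : rM (Y ∪ X f) = rM Y := by
              apply le_antisymm
              · calc rM (Y ∪ X f) ≤ rM ((Y ∪ A.biUnion X) ∪ X f) := by
                      refine hM.monotone _ _ ?_
                        (Finset.union_subset hWG hXfG)
                      exact Finset.union_subset_union_left
                        Finset.subset_union_left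
                  _ = rM (Y ∪ A.biUnion X) := hUf
                  _ = rM Y := step1
              · exact hM.monotone _ _ Finset.subset_union_left
                  (Finset.union_subset hY hXfG)
            exact hfA (Finset.mem_filter.2 ⟨hf, hYf⟩)
          have e1 : A.biUnion X ∪ insert a S = insert a Z := by
            rw [hZdef, Finset.union_insert]
          rw [e1, hkey, hZval, Finset.card_insert_of_notMem ha]
          ring
      -- conclude
      have e2 : A.biUnion X ∪ (Y \ A.biUnion X) = Y ∪ A.biUnion X := by
        rw [Finset.union_sdiff_self_eq_union, Finset.union_comm]
      have := step2 (Y \ A.biUnion X) (le_refl _)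
      rw [e2, step1] at this
      rw [this]
      exact natRank_le E ρ X Y hA
end

section
/- For any polymatroid (E,ρ) and e ∈ E, the k-natural matroid of the deletion equals the deletion of the k-natural matroid: M_{ρ∖e}^k = M_ρ^k ∖ X_e. -/
/-- The `k`-natural matroid of the deletion `ρ ∖ e` is the deletion `M_ρ^k ∖ X_e`:
as the deletion of a matroid is the restriction of its rank function, the two matroids
have the same ground set and the same rank on every subset of it. -/
theorem natRank_delete {α β : Type*} [DecidableEq α] [DecidableEq β] (k : ℕ)
    (E : Finset α) (ρ : Finset α → ℕ) (h : IsPolymatroid E ρ) (e : α) (he : e ∈ E)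
    (X : α → Finset β) (hcard : ∀ e ∈ E, (X e).card = k)
    (hdisjX : ∀ e ∈ E, ∀ f ∈ E, e ≠ f → Disjoint (X e) (X f)) :
    ∀ Y ⊆ (E.erase e).biUnion X, natRank (E.erase e) ρ X Y = natRank E ρ X Y := by
  intro Y hY
  have hYe : ∀ y ∈ Y, y ∉ X e := by
    intro y hy hye
    obtain ⟨g, hg, hyg⟩ := Finset.mem_biUnion.mp (hY hy)
    obtain ⟨hge, hgE⟩ := Finset.mem_erase.mp hg
    exact (Finset.disjoint_left.mp (hdisjX g hgE e he hge) hyg) hye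
  apply le_antisymm
  · unfold natRank
    apply Finset.le_min'
    intro b hb
    obtain ⟨A, hA, rfl⟩ := Finset.mem_image.mp hb
    rw [Finset.mem_powerset] at hA
    have hsd : Y \ (A.erase e).biUnion X = Y \ A.biUnion X := by
      ext y
      simp only [Finset.mem_sdiff, Finset.mem_biUnion, Finset.mem_erase]
      constructor
      · rintro ⟨hy, hn⟩
        exact ⟨hy, fun ⟨f, hf, hyf⟩ => hn ⟨f, ⟨fun hfe => hYe y hy (hfe ▸ hyf), hf⟩, hyf⟩⟩
      · rintro ⟨hy, hn⟩
        exact ⟨hy, fun ⟨f, ⟨_, hf⟩, hyf⟩ => hn ⟨f, hf, hyf⟩⟩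
    calc ((E.erase e).powerset.image fun A => ρ A + (Y \ A.biUnion X).card).min'
          ((Finset.powerset_nonempty _).image _)
        ≤ ρ (A.erase e) + (Y \ (A.erase e).biUnion X).card :=
        Finset.min'_le _ _ (Finset.mem_image.mpr ⟨A.erase e,
          Finset.mem_powerset.mpr (Finset.erase_subset_erase e hA), rfl⟩)
      _ ≤ ρ A + (Y \ A.biUnion X).card := by
        rw [hsd]
        exact Nat.add_le_add_right (h.monotone _ _ (Finset.erase_subset _ _) hA) _
  · unfold natRank
    apply Finset.le_min'
    intro b hb
    obtain ⟨A, hA, rfl⟩ := Finset.mem_image.mp hb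
    rw [Finset.mem_powerset] at hA
    exact Finset.min'_le _ _ (Finset.mem_image.mpr ⟨A,
      Finset.mem_powerset.mpr (hA.trans (Finset.erase_subset _ _)), rfl⟩)
end

section
/- For any k-polymatroid (E,ρ) and e ∈ E, the k-natural matroid of the contraction equals the contraction of the k-natural matroid: M_{ρ/e}^k = M_ρ^k / X_e. -/
/-- The `k`-natural matroid of the contraction `ρ / e` is the contraction `M_ρ^k / X_e`:
both matroids live on `X_{E - e}` and the rank of `M_ρ^k / X_e` is
`Y ↦ r(Y ∪ X_e) - r(X_e)`. -/
theorem natRank_contract {α β : Type*} [DecidableEq α] [DecidableEq β] (k : ℕ)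
    (E : Finset α) (ρ : Finset α → ℕ) (h : IsPolymatroid E ρ)
    (hk : ∀ e ∈ E, ρ {e} ≤ k) (e : α) (he : e ∈ E)
    (X : α → Finset β) (hcard : ∀ e ∈ E, (X e).card = k)
    (hdisjX : ∀ e ∈ E, ∀ f ∈ E, e ≠ f → Disjoint (X e) (X f)) :
    ∀ Y ⊆ (E.erase e).biUnion X,
      natRank (E.erase e) (fun A => ρ (insert e A) - ρ {e}) X Y =
        natRank E ρ X (Y ∪ X e) - natRank E ρ X (X e) := by
  intro Y hY
  have hYe : ∀ x ∈ Y, x ∉ X e := by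
    intro x hx hxe
    obtain ⟨f, hf, hxf⟩ := Finset.mem_biUnion.1 (hY hx)
    exact (Finset.disjoint_left.1 (hdisjX f (Finset.mem_of_mem_erase hf) e he
      (Finset.ne_of_mem_erase hf)) hxf) hxe
  have hdisjA : ∀ A : Finset α, A ⊆ E → e ∉ A → Disjoint (X e) (A.biUnion X) := by
    intro A hA heA
    rw [Finset.disjoint_biUnion_right]
    intro f hf
    exact hdisjX e he f (hA hf) (fun hef => heA (hef ▸ hf))
  -- card lemma 1 : removing X over insert e B
  have hcard1 : ∀ B : Finset α, ((Y ∪ X e) \ ((insert e B).biUnion X)).card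
      = (Y \ B.biUnion X).card := by
    intro B
    congr 1
    rw [Finset.biUnion_insert]
    ext x
    simp only [Finset.mem_sdiff, Finset.mem_union, not_or]
    constructor
    · rintro ⟨hx | hx, hxe, hxB⟩
      · exact ⟨hx, hxB⟩
      · exact absurd hx hxe
    · rintro ⟨hx, hxB⟩
      exact ⟨Or.inl hx, hYe x hx, hxB⟩
  -- card lemma 2 : e ∉ A
  have hcard2 : ∀ A : Finset α, A ⊆ E → e ∉ A →
      ((Y ∪ X e) \ A.biUnion X).card = (Y \ A.biUnion X).card + k := by
    intro A hA heA
    have hd := hdisjA A hA heA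
    have hset : (Y ∪ X e) \ A.biUnion X = (Y \ A.biUnion X) ∪ X e := by
      rw [Finset.union_sdiff_distrib, Finset.sdiff_eq_self_of_disjoint hd]
    rw [hset, Finset.card_union_of_disjoint, hcard e he]
    exact Finset.disjoint_left.2 fun x hx => hYe x (Finset.mem_sdiff.1 hx).1
  -- rank of X e is ρ {e}
  have hr3 : natRank E ρ X (X e) = ρ {e} := by
    apply le_antisymm
    · apply Finset.min'_le
      apply Finset.mem_image.2
      refine ⟨{e}, Finset.mem_powerset.2 (by simpa using he), ?_⟩
      simp
    · apply Finset.le_min'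
      intro y hy
      obtain ⟨A, hA, rfl⟩ := Finset.mem_image.1 hy
      rw [Finset.mem_powerset] at hA
      by_cases heA : e ∈ A
      · have := h.monotone {e} A (Finset.singleton_subset_iff.2 heA) hA
        omega
      · have hd := hdisjA A hA heA
        have : (X e \ A.biUnion X).card = k := by
          rw [Finset.sdiff_eq_self_of_disjoint hd, hcard e he]
        have := hk e he
        omega
  -- the auxiliary min
  set g : Finset α → ℕ := fun B => ρ (insert e B) + (Y \ B.biUnion X).card with hg
  have hEne : ((E.erase e).powerset.image g).Nonempty :=
    (Finset.powerset_nonempty _).image g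
  set m := ((E.erase e).powerset.image g).min' hEne with hm
  have hsub : ∀ B : Finset α, B ⊆ E.erase e → ρ {e} ≤ ρ (insert e B) := by
    intro B hB
    exact h.monotone {e} (insert e B) (Finset.singleton_subset_iff.2 (Finset.mem_insert_self e B))
      (Finset.insert_subset he (hB.trans (Finset.erase_subset e E)))
  have hr2 : natRank E ρ X (Y ∪ X e) = m := by
    apply le_antisymm
    · obtain ⟨B, hB, hgB⟩ := Finset.mem_image.1 (Finset.min'_mem _ hEne)
      rw [Finset.mem_powerset] at hB
      have hmem : g B ∈ E.powerset.image fun A => ρ A + ((Y ∪ X e) \ A.biUnion X).card := by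
        apply Finset.mem_image.2
        refine ⟨insert e B, Finset.mem_powerset.2
          (Finset.insert_subset he (hB.trans (Finset.erase_subset e E))), ?_⟩
        rw [hcard1 B]
      rw [hm, ← hgB]
      exact Finset.min'_le _ _ hmem
    · apply Finset.le_min'
      intro y hy
      obtain ⟨A, hA, rfl⟩ := Finset.mem_image.1 hy
      rw [Finset.mem_powerset] at hA
      by_cases heA : e ∈ A
      · have hB : A.erase e ⊆ E.erase e := Finset.erase_subset_erase e hA
        have hins : insert e (A.erase e) = A := Finset.insert_erase heA
        have : m ≤ g (A.erase e) := Finset.min'_le _ _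
          (Finset.mem_image.2 ⟨A.erase e, Finset.mem_powerset.2 hB, rfl⟩)
        have h1 := hcard1 (A.erase e)
        rw [hins] at h1
        have hgval : g (A.erase e) = ρ A + ((Y ∪ X e) \ A.biUnion X).card := by
          simp only [hg]
          rw [hins, h1]
        exact hgval ▸ this
      · have hB : A ⊆ E.erase e := Finset.subset_erase.2 ⟨hA, heA⟩
        have hmle : m ≤ g A := Finset.min'_le _ _
          (Finset.mem_image.2 ⟨A, Finset.mem_powerset.2 hB, rfl⟩)
        have hsubm := h.submodular A {e} hA (Finset.singleton_subset_iff.2 he)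
        rw [Finset.union_comm, ← Finset.insert_eq] at hsubm
        have hint : A ∩ {e} = ∅ := by
          rw [Finset.inter_singleton_of_notMem heA]
        rw [hint, h.normalized] at hsubm
        have hck := hk e he
        have hc2 := hcard2 A hA heA
        have hgA : g A = ρ (insert e A) + (Y \ A.biUnion X).card := rfl
        omega
  -- LHS = m - ρ {e}
  have hr1 : natRank (E.erase e) (fun A => ρ (insert e A) - ρ {e}) X Y = m - ρ {e} := by
    apply le_antisymm
    · obtain ⟨B, hB, hgB⟩ := Finset.mem_image.1 (Finset.min'_mem _ hEne)
      rw [Finset.mem_powerset] at hB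
      have hmem : (ρ (insert e B) - ρ {e}) + (Y \ B.biUnion X).card ∈
          (E.erase e).powerset.image fun A => (ρ (insert e A) - ρ {e}) + (Y \ A.biUnion X).card :=
        Finset.mem_image.2 ⟨B, Finset.mem_powerset.2 hB, rfl⟩
      have hle : natRank (E.erase e) (fun A => ρ (insert e A) - ρ {e}) X Y
          ≤ (ρ (insert e B) - ρ {e}) + (Y \ B.biUnion X).card := Finset.min'_le _ _ hmem
      have hρ := hsub B hB
      have hgBval : g B = ρ (insert e B) + (Y \ B.biUnion X).card := rfl
      rw [hm, ← hgB]
      omega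
    · obtain ⟨B, hB, hgB⟩ := Finset.mem_image.1
        (Finset.min'_mem _ ((Finset.powerset_nonempty (E.erase e)).image
          fun A => (ρ (insert e A) - ρ {e}) + (Y \ A.biUnion X).card))
      rw [Finset.mem_powerset] at hB
      have hmle : m ≤ g B := Finset.min'_le _ _
        (Finset.mem_image.2 ⟨B, Finset.mem_powerset.2 hB, rfl⟩)
      have hρ := hsub B hB
      have hterm : natRank (E.erase e) (fun A => ρ (insert e A) - ρ {e}) X Y
          = (ρ (insert e B) - ρ {e}) + (Y \ B.biUnion X).card := hgB.symm
      have hgBval : g B = ρ (insert e B) + (Y \ B.biUnion X).card := rfl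
      omega
  rw [hr1, hr2, hr3]
end

section
/- If C is a minor-closed class of matroids all of whose excluded minors are connected, then the class of k-polymatroids whose k-natural matroids lie in C is closed under direct sums: if M_{ρ₁}^k ∈ C and M_{ρ₂}^k ∈ C then M_{ρ₁⊕ρ₂}^k ∈ C. -/
set_option maxHeartbeats 1000000

namespace NatRankAux

variable {α β : Type*} [DecidableEq α] [DecidableEq β]

lemma natRank_exists (E : Finset α) (ρ : Finset α → ℕ) (X : α → Finset β) (Y : Finset β) :
    ∃ A, A ⊆ E ∧ natRank E ρ X Y = ρ A + (Y \ A.biUnion X).card := by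
  obtain ⟨A, hA, h⟩ := Finset.mem_image.1
    (Finset.min'_mem (E.powerset.image fun A => ρ A + (Y \ A.biUnion X).card)
      ((E.powerset_nonempty).image _))
  exact ⟨A, Finset.mem_powerset.1 hA, h.symm⟩

lemma natRank_mono (E : Finset α) (ρ : Finset α → ℕ) (X : α → Finset β) {Y Z : Finset β}
    (h : Y ⊆ Z) : natRank E ρ X Y ≤ natRank E ρ X Z := by
  obtain ⟨A, hA, hEq⟩ := natRank_exists E ρ X Z
  calc natRank E ρ X Y ≤ ρ A + (Y \ A.biUnion X).card := natRank_le _ _ _ _ hA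
    _ ≤ ρ A + (Z \ A.biUnion X).card :=
        Nat.add_le_add_left (Finset.card_le_card (Finset.sdiff_subset_sdiff h (le_refl _))) _
    _ = natRank E ρ X Z := hEq.symm

lemma finset_biUnion_union (s t : Finset α) (f : α → Finset β) :
    (s ∪ t).biUnion f = s.biUnion f ∪ t.biUnion f := by
  ext x
  simp only [Finset.mem_biUnion, Finset.mem_union]
  constructor
  · rintro ⟨e, he | he, hx⟩
    · exact Or.inl ⟨e, he, hx⟩
    · exact Or.inr ⟨e, he, hx⟩
  · rintro (⟨e, he, hx⟩ | ⟨e, he, hx⟩)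
    · exact ⟨e, Or.inl he, hx⟩
    · exact ⟨e, Or.inr he, hx⟩

lemma card_sdiff_submod (Y Z S T : Finset β) :
    ((Y ∪ Z) \ (S ∪ T)).card + ((Y ∩ Z) \ (S ∩ T)).card
      ≤ (Y \ S).card + (Z \ T).card := by
  have h1 : ((Y ∪ Z) \ (S ∪ T)) ∪ ((Y ∩ Z) \ (S ∩ T)) ⊆ (Y \ S) ∪ (Z \ T) := by
    intro x hx
    simp only [Finset.mem_union, Finset.mem_sdiff, Finset.mem_inter, not_or, not_and_or] at hx ⊢
    tauto
  have h2 : ((Y ∪ Z) \ (S ∪ T)) ∩ ((Y ∩ Z) \ (S ∩ T)) ⊆ (Y \ S) ∩ (Z \ T) := by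
    intro x hx
    simp only [Finset.mem_union, Finset.mem_sdiff, Finset.mem_inter, not_or, not_and_or] at hx ⊢
    tauto
  calc ((Y ∪ Z) \ (S ∪ T)).card + ((Y ∩ Z) \ (S ∩ T)).card
      = (((Y ∪ Z) \ (S ∪ T)) ∪ ((Y ∩ Z) \ (S ∩ T))).card
        + (((Y ∪ Z) \ (S ∪ T)) ∩ ((Y ∩ Z) \ (S ∩ T))).card :=
        (Finset.card_union_add_card_inter _ _).symm
    _ ≤ ((Y \ S) ∪ (Z \ T)).card + ((Y \ S) ∩ (Z \ T)).card :=
        Nat.add_le_add (Finset.card_le_card h1) (Finset.card_le_card h2)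
    _ = (Y \ S).card + (Z \ T).card := Finset.card_union_add_card_inter _ _

lemma isMatroidRank_natRank (E : Finset α) (ρ : Finset α → ℕ) (X : α → Finset β)
    (hρ : IsPolymatroid E ρ)
    (hX : ∀ e ∈ E, ∀ f ∈ E, e ≠ f → Disjoint (X e) (X f)) :
    IsMatroidRank (E.biUnion X) (natRank E ρ X) := by
  constructor
  · exact le_antisymm
      (by simpa [hρ.normalized] using natRank_le E ρ X ∅ (Finset.empty_subset E)) (Nat.zero_le _)
  · intro Y _
    simpa [hρ.normalized] using natRank_le E ρ X Y (Finset.empty_subset E)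
  · intro A B h _
    exact natRank_mono E ρ X h
  · intro Y Z _ _
    obtain ⟨A, hA, hAe⟩ := natRank_exists E ρ X Y
    obtain ⟨B, hB, hBe⟩ := natRank_exists E ρ X Z
    have hXcap : (A ∩ B).biUnion X = A.biUnion X ∩ B.biUnion X := by
      ext x
      simp only [Finset.mem_biUnion, Finset.mem_inter]
      constructor
      · rintro ⟨e, ⟨heA, heB⟩, hx⟩
        exact ⟨⟨e, heA, hx⟩, ⟨e, heB, hx⟩⟩
      · rintro ⟨⟨e, heA, hx⟩, ⟨f, hfB, hx'⟩⟩
        have hef : e = f := by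
          by_contra hne
          exact Finset.disjoint_left.1 (hX e (hA heA) f (hB hfB) hne) hx hx'
        exact ⟨e, ⟨heA, hef ▸ hfB⟩, hx⟩
    have h1 := natRank_le E ρ X (Y ∪ Z) (Finset.union_subset hA hB)
    have h2 := natRank_le E ρ X (Y ∩ Z) ((Finset.inter_subset_left : A ∩ B ⊆ A).trans hA)
    have hsub := hρ.submodular A B hA hB
    have hcard := card_sdiff_submod Y Z (A.biUnion X) (B.biUnion X)
    rw [finset_biUnion_union] at h1
    rw [hXcap] at h2
    omega

lemma rank_union_le_s17 {G : Finset β} {r : Finset β → ℕ} (hr : IsMatroidRank G r) {A B : Finset β}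
    (hA : A ⊆ G) (hB : B ⊆ G) : r (A ∪ B) ≤ r A + B.card := by
  have h := hr.submodular A (B \ A) hA ((Finset.sdiff_subset).trans hB)
  rw [Finset.union_sdiff_self_eq_union, Finset.inter_sdiff_self] at h
  have h2 : r (B \ A) ≤ (B \ A).card := hr.le_card _ ((Finset.sdiff_subset).trans hB)
  have h3 : (B \ A).card ≤ B.card := Finset.card_le_card Finset.sdiff_subset
  have h0 : r ∅ = 0 := hr.normalized
  omega

lemma isMatroidRank_minor {G : Finset β} {r : Finset β → ℕ} (hr : IsMatroidRank G r)
    {D Ct : Finset β} (hD : D ⊆ G) (hCt : Ct ⊆ G) :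
    IsMatroidRank ((G \ D) \ Ct) (fun Y => r (Y ∪ Ct) - r Ct) := by
  have hGsub : (G \ D) \ Ct ⊆ G := (Finset.sdiff_subset).trans Finset.sdiff_subset
  constructor
  · simp
  · intro Y hY
    have hYG : Y ⊆ G := hY.trans hGsub
    have h2 : r (Y ∪ Ct) ≤ r Ct + Y.card := by
      rw [Finset.union_comm]
      exact rank_union_le_s17 hr hCt hYG
    omega
  · intro A B hAB hB
    exact Nat.sub_le_sub_right
      (hr.monotone _ _ (Finset.union_subset_union hAB (le_refl Ct))
        (Finset.union_subset (hB.trans hGsub) hCt)) _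
  · intro Y Z hY hZ
    have hYG : Y ⊆ G := hY.trans hGsub
    have hZG : Z ⊆ G := hZ.trans hGsub
    have e1 : (Y ∪ Ct) ∪ (Z ∪ Ct) = (Y ∪ Z) ∪ Ct := by
      ext x; simp only [Finset.mem_union]; tauto
    have e2 : (Y ∪ Ct) ∩ (Z ∪ Ct) = (Y ∩ Z) ∪ Ct := by
      ext x; simp only [Finset.mem_union, Finset.mem_inter]; tauto
    have hs := hr.submodular (Y ∪ Ct) (Z ∪ Ct) (Finset.union_subset hYG hCt)
      (Finset.union_subset hZG hCt)
    rw [e1, e2] at hs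
    have m1 : r Ct ≤ r (Y ∪ Ct) :=
      hr.monotone _ _ Finset.subset_union_right (Finset.union_subset hYG hCt)
    have m2 : r Ct ≤ r (Z ∪ Ct) :=
      hr.monotone _ _ Finset.subset_union_right (Finset.union_subset hZG hCt)
    have m3 : r Ct ≤ r ((Y ∩ Z) ∪ Ct) :=
      hr.monotone _ _ Finset.subset_union_right
        (Finset.union_subset ((Finset.inter_subset_left).trans hYG) hCt)
    have m4 : r Ct ≤ r ((Y ∪ Z) ∪ Ct) :=
      hr.monotone _ _ Finset.subset_union_right
        (Finset.union_subset (Finset.union_subset hYG hZG) hCt)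
    omega

lemma isPolymatroid_directSum {E₁ E₂ : Finset α} {ρ₁ ρ₂ : Finset α → ℕ}
    (h₁ : IsPolymatroid E₁ ρ₁) (h₂ : IsPolymatroid E₂ ρ₂) :
    IsPolymatroid (E₁ ∪ E₂) (fun A => ρ₁ (A ∩ E₁) + ρ₂ (A ∩ E₂)) := by
  constructor
  · simp [h₁.normalized, h₂.normalized]
  · intro A B hAB _
    exact Nat.add_le_add
      (h₁.monotone _ _ (Finset.inter_subset_inter hAB (le_refl _)) Finset.inter_subset_right)
      (h₂.monotone _ _ (Finset.inter_subset_inter hAB (le_refl _)) Finset.inter_subset_right)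
  · intro A B _ _
    have e1 : (A ∪ B) ∩ E₁ = (A ∩ E₁) ∪ (B ∩ E₁) := by
      ext x; simp only [Finset.mem_inter, Finset.mem_union]; tauto
    have e2 : (A ∩ B) ∩ E₁ = (A ∩ E₁) ∩ (B ∩ E₁) := by
      ext x; simp only [Finset.mem_inter]; tauto
    have e3 : (A ∪ B) ∩ E₂ = (A ∩ E₂) ∪ (B ∩ E₂) := by
      ext x; simp only [Finset.mem_inter, Finset.mem_union]; tauto
    have e4 : (A ∩ B) ∩ E₂ = (A ∩ E₂) ∩ (B ∩ E₂) := by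
      ext x; simp only [Finset.mem_inter]; tauto
    rw [e1, e2, e3, e4]
    have s1 := h₁.submodular (A ∩ E₁) (B ∩ E₁) Finset.inter_subset_right Finset.inter_subset_right
    have s2 := h₂.submodular (A ∩ E₂) (B ∩ E₂) Finset.inter_subset_right Finset.inter_subset_right
    omega

lemma card_sdiff_split {Y G₁ G₂ S₁ S₂ : Finset β} (hY : Y ⊆ G₁ ∪ G₂)
    (h12 : Disjoint G₁ G₂) (hS₁ : S₁ ⊆ G₁) (hS₂ : S₂ ⊆ G₂) :
    (Y \ (S₁ ∪ S₂)).card = ((Y ∩ G₁) \ S₁).card + ((Y ∩ G₂) \ S₂).card := by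
  have hd := Finset.disjoint_left.1 h12
  have he : Y \ (S₁ ∪ S₂) = ((Y ∩ G₁) \ S₁) ∪ ((Y ∩ G₂) \ S₂) := by
    ext x
    simp only [Finset.mem_sdiff, Finset.mem_union, Finset.mem_inter, not_or]
    constructor
    · rintro ⟨hxY, hx1, hx2⟩
      rcases Finset.mem_union.1 (hY hxY) with h | h
      · exact Or.inl ⟨⟨hxY, h⟩, hx1⟩
      · exact Or.inr ⟨⟨hxY, h⟩, hx2⟩
    · rintro (⟨⟨hxY, hg⟩, hns⟩ | ⟨⟨hxY, hg⟩, hns⟩)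
      · exact ⟨hxY, hns, fun c => hd hg (hS₂ c)⟩
      · exact ⟨hxY, fun c => hd (hS₁ c) hg, hns⟩
  rw [he, Finset.card_union_of_disjoint
    (h12.mono ((Finset.sdiff_subset).trans Finset.inter_subset_right)
      ((Finset.sdiff_subset).trans Finset.inter_subset_right))]

lemma disjoint_biUnion_of_disjoint {E₁ E₂ : Finset α} (X : α → Finset β) (hE : Disjoint E₁ E₂)
    (hdisjX : ∀ e ∈ E₁ ∪ E₂, ∀ f ∈ E₁ ∪ E₂, e ≠ f → Disjoint (X e) (X f)) :
    Disjoint (E₁.biUnion X) (E₂.biUnion X) := by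
  rw [Finset.disjoint_left]
  intro x hx1 hx2
  obtain ⟨e, he, hxe⟩ := Finset.mem_biUnion.1 hx1
  obtain ⟨f, hf, hxf⟩ := Finset.mem_biUnion.1 hx2
  have hef : e ≠ f := fun h => Finset.disjoint_left.1 hE (h ▸ he) hf
  exact Finset.disjoint_left.1
    (hdisjX e (Finset.mem_union_left _ he) f (Finset.mem_union_right _ hf) hef) hxe hxf

lemma natRank_directSum_decomp (E₁ E₂ : Finset α) (ρ₁ ρ₂ : Finset α → ℕ) (X : α → Finset β)
    (hE : Disjoint E₁ E₂)
    (hdisjX : ∀ e ∈ E₁ ∪ E₂, ∀ f ∈ E₁ ∪ E₂, e ≠ f → Disjoint (X e) (X f))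
    {Y : Finset β} (hY : Y ⊆ E₁.biUnion X ∪ E₂.biUnion X) :
    natRank (E₁ ∪ E₂) (fun A => ρ₁ (A ∩ E₁) + ρ₂ (A ∩ E₂)) X Y
      = natRank E₁ ρ₁ X (Y ∩ E₁.biUnion X) + natRank E₂ ρ₂ X (Y ∩ E₂.biUnion X) := by
  have h12 : Disjoint (E₁.biUnion X) (E₂.biUnion X) := disjoint_biUnion_of_disjoint X hE hdisjX
  apply le_antisymm
  · obtain ⟨A₁, hA₁, e1⟩ := natRank_exists E₁ ρ₁ X (Y ∩ E₁.biUnion X)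
    obtain ⟨A₂, hA₂, e2⟩ := natRank_exists E₂ ρ₂ X (Y ∩ E₂.biUnion X)
    have h := natRank_le (E₁ ∪ E₂) (fun A => ρ₁ (A ∩ E₁) + ρ₂ (A ∩ E₂)) X Y
      (Finset.union_subset_union hA₁ hA₂)
    beta_reduce at h
    have hi1 : (A₁ ∪ A₂) ∩ E₁ = A₁ := by
      ext x
      simp only [Finset.mem_inter, Finset.mem_union]
      constructor
      · rintro ⟨h1 | h2, hE1⟩
        · exact h1
        · exact absurd hE1 (Finset.disjoint_right.1 hE (hA₂ h2))
      · exact fun hx => ⟨Or.inl hx, hA₁ hx⟩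
    have hi2 : (A₁ ∪ A₂) ∩ E₂ = A₂ := by
      ext x
      simp only [Finset.mem_inter, Finset.mem_union]
      constructor
      · rintro ⟨h1 | h2, hE2⟩
        · exact absurd hE2 (Finset.disjoint_left.1 hE (hA₁ h1))
        · exact h2
      · exact fun hx => ⟨Or.inr hx, hA₂ hx⟩
    have hb : (A₁ ∪ A₂).biUnion X = A₁.biUnion X ∪ A₂.biUnion X := finset_biUnion_union _ _ _
    have hsplit := card_sdiff_split hY h12
      (Finset.biUnion_subset_biUnion_of_subset_left X hA₁)
      (Finset.biUnion_subset_biUnion_of_subset_left X hA₂)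
    rw [hi1, hi2, hb, hsplit] at h
    omega
  · obtain ⟨A, hA, hAe⟩ := natRank_exists (E₁ ∪ E₂) (fun A => ρ₁ (A ∩ E₁) + ρ₂ (A ∩ E₂)) X Y
    have hA1 := natRank_le E₁ ρ₁ X (Y ∩ E₁.biUnion X)
      (Finset.inter_subset_right : A ∩ E₁ ⊆ E₁)
    have hA2 := natRank_le E₂ ρ₂ X (Y ∩ E₂.biUnion X)
      (Finset.inter_subset_right : A ∩ E₂ ⊆ E₂)
    have hb : A.biUnion X = (A ∩ E₁).biUnion X ∪ (A ∩ E₂).biUnion X := by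
      rw [← finset_biUnion_union]
      congr 1
      ext x
      simp only [Finset.mem_union, Finset.mem_inter]
      constructor
      · intro hx
        rcases Finset.mem_union.1 (hA hx) with h | h
        · exact Or.inl ⟨hx, h⟩
        · exact Or.inr ⟨hx, h⟩
      · tauto
    have hsplit := card_sdiff_split hY h12
      (Finset.biUnion_subset_biUnion_of_subset_left X (Finset.inter_subset_right : A ∩ E₁ ⊆ E₁))
      (Finset.biUnion_subset_biUnion_of_subset_left X (Finset.inter_subset_right : A ∩ E₂ ⊆ E₂))
    rw [hb, hsplit] at hAe
    omega

end NatRankAux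

/-- If `C` is a minor-closed class of matroids all of whose excluded minors are connected,
then the class of `k`-polymatroids whose `k`-natural matroids lie in `C` is closed under
direct sums. An excluded minor for `C` is a matroid not in `C` all of whose proper minors
lie in `C`; a matroid is connected if its rank function does not decompose across a
nontrivial partition of its ground set. -/
theorem natRank_directSum_mem {α β : Type*} [DecidableEq α] [DecidableEq β] (k : ℕ)
    (C : Finset β → (Finset β → ℕ) → Prop)
    (hext : ∀ (G : Finset β) (r r' : Finset β → ℕ),
      (∀ Y ⊆ G, r Y = r' Y) → (C G r ↔ C G r'))
    (hminor : ∀ (G : Finset β) (r : Finset β → ℕ), C G r →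
      ∀ D Ct : Finset β, D ⊆ G → Ct ⊆ G → Disjoint D Ct →
        C ((G \ D) \ Ct) (fun Y => r (Y ∪ Ct) - r Ct))
    (hconn : ∀ (G : Finset β) (r : Finset β → ℕ), IsMatroidRank G r → ¬ C G r →
      (∀ D Ct : Finset β, D ⊆ G → Ct ⊆ G → Disjoint D Ct → (D ∪ Ct).Nonempty →
        C ((G \ D) \ Ct) (fun Y => r (Y ∪ Ct) - r Ct)) →
      ¬ ∃ G₁ G₂ : Finset β, G₁ ∪ G₂ = G ∧ Disjoint G₁ G₂ ∧ G₁.Nonempty ∧ G₂.Nonempty ∧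
        ∀ Y ⊆ G, r Y = r (Y ∩ G₁) + r (Y ∩ G₂))
    (E₁ E₂ : Finset α) (ρ₁ ρ₂ : Finset α → ℕ)
    (h₁ : IsPolymatroid E₁ ρ₁) (h₂ : IsPolymatroid E₂ ρ₂) (hE : Disjoint E₁ E₂)
    (hk₁ : ∀ e ∈ E₁, ρ₁ {e} ≤ k) (hk₂ : ∀ e ∈ E₂, ρ₂ {e} ≤ k)
    (X : α → Finset β) (hcard : ∀ e ∈ E₁ ∪ E₂, (X e).card = k)
    (hdisjX : ∀ e ∈ E₁ ∪ E₂, ∀ f ∈ E₁ ∪ E₂, e ≠ f → Disjoint (X e) (X f))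
    (hC₁ : C (E₁.biUnion X) (natRank E₁ ρ₁ X))
    (hC₂ : C (E₂.biUnion X) (natRank E₂ ρ₂ X)) :
    C ((E₁ ∪ E₂).biUnion X)
      (natRank (E₁ ∪ E₂) (fun A => ρ₁ (A ∩ E₁) + ρ₂ (A ∩ E₂)) X) := by
  classical
  set G₁ := E₁.biUnion X with hG₁def
  set G₂ := E₂.biUnion X with hG₂def
  have hGu : (E₁ ∪ E₂).biUnion X = G₁ ∪ G₂ := NatRankAux.finset_biUnion_union _ _ _
  set ρ : Finset α → ℕ := fun A => ρ₁ (A ∩ E₁) + ρ₂ (A ∩ E₂) with hρdef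
  set r := natRank (E₁ ∪ E₂) ρ X with hrdef
  set r₁ := natRank E₁ ρ₁ X with hr₁def
  set r₂ := natRank E₂ ρ₂ X with hr₂def
  have h12 : Disjoint G₁ G₂ := NatRankAux.disjoint_biUnion_of_disjoint X hE hdisjX
  have hd12 : ∀ x, x ∈ G₁ → x ∉ G₂ := fun x ha hb => Finset.disjoint_left.1 h12 ha hb
  have hdecomp : ∀ Y ⊆ G₁ ∪ G₂, r Y = r₁ (Y ∩ G₁) + r₂ (Y ∩ G₂) :=
    fun Y hY => NatRankAux.natRank_directSum_decomp E₁ E₂ ρ₁ ρ₂ X hE hdisjX hY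
  have hmr : IsMatroidRank (G₁ ∪ G₂) r := by
    have h := NatRankAux.isMatroidRank_natRank (E₁ ∪ E₂) ρ X
      (NatRankAux.isPolymatroid_directSum h₁ h₂) hdisjX
    rwa [hGu] at h
  have hmono : ∀ Y Z : Finset β, Y ⊆ Z → r Y ≤ r Z :=
    fun Y Z h => NatRankAux.natRank_mono _ _ _ h
  have hmono₁ : ∀ Y Z : Finset β, Y ⊆ Z → r₁ Y ≤ r₁ Z :=
    fun Y Z h => NatRankAux.natRank_mono _ _ _ h
  have hmono₂ : ∀ Y Z : Finset β, Y ⊆ Z → r₂ Y ≤ r₂ Z :=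
    fun Y Z h => NatRankAux.natRank_mono _ _ _ h
  have key : ∀ n (D Ct : Finset β), D ⊆ G₁ ∪ G₂ → Ct ⊆ G₁ ∪ G₂ → Disjoint D Ct →
      (((G₁ ∪ G₂) \ D) \ Ct).card ≤ n →
      C (((G₁ ∪ G₂) \ D) \ Ct) (fun Y => r (Y ∪ Ct) - r Ct) := by
    intro n
    induction n using Nat.strong_induction_on with
    | _ n IH =>
    intro D Ct hD hCt hDCt hcardn
    by_contra hnC
    set G' := ((G₁ ∪ G₂) \ D) \ Ct with hG'def
    have hG'sub : G' ⊆ G₁ ∪ G₂ := (Finset.sdiff_subset).trans Finset.sdiff_subset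
    have hG'D : Disjoint G' D :=
      Finset.disjoint_of_subset_left Finset.sdiff_subset (Finset.sdiff_disjoint)
    have hG'Ct : Disjoint G' Ct := Finset.sdiff_disjoint
    have hmr' : IsMatroidRank G' (fun Y => r (Y ∪ Ct) - r Ct) :=
      NatRankAux.isMatroidRank_minor hmr hD hCt
    have hminors : ∀ D' Ct' : Finset β, D' ⊆ G' → Ct' ⊆ G' → Disjoint D' Ct' →
        (D' ∪ Ct').Nonempty →
        C ((G' \ D') \ Ct')
          (fun Y => (fun Z => r (Z ∪ Ct) - r Ct) (Y ∪ Ct')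
            - (fun Z => r (Z ∪ Ct) - r Ct) Ct') := by
      intro D' Ct' hD' hCt' hDC' hne
      obtain ⟨x, hx⟩ := hne
      have hxG' : x ∈ G' := by
        rcases Finset.mem_union.1 hx with h | h
        · exact hD' h
        · exact hCt' h
      have hxnot : x ∉ (G' \ D') \ Ct' := by
        rcases Finset.mem_union.1 hx with h | h
        · exact fun hc => ((Finset.mem_sdiff.1 (Finset.mem_sdiff.1 hc).1).2) h
        · exact fun hc => (Finset.mem_sdiff.1 hc).2 h
      have hss : (G' \ D') \ Ct' ⊂ G' :=
        (Finset.ssubset_iff_of_subset ((Finset.sdiff_subset).trans Finset.sdiff_subset)).2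
          ⟨x, hxG', hxnot⟩
      have hm : ((G' \ D') \ Ct').card < n :=
        lt_of_lt_of_le (Finset.card_lt_card hss) hcardn
      have heq : ((G₁ ∪ G₂) \ (D ∪ D')) \ (Ct ∪ Ct') = (G' \ D') \ Ct' := by
        ext y
        simp only [hG'def, Finset.mem_sdiff, Finset.mem_union, not_or]
        tauto
      have hdisj' : Disjoint (D ∪ D') (Ct ∪ Ct') :=
        Finset.disjoint_union_left.2
          ⟨Finset.disjoint_union_right.2 ⟨hDCt, (hG'D.symm).mono_right hCt'⟩,
           Finset.disjoint_union_right.2 ⟨hG'Ct.mono_left hD', hDC'⟩⟩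
      have hIH := IH (((G' \ D') \ Ct').card) hm (D ∪ D') (Ct ∪ Ct')
        (Finset.union_subset hD (hD'.trans hG'sub))
        (Finset.union_subset hCt (hCt'.trans hG'sub))
        hdisj' (congrArg Finset.card heq).le
      rw [heq] at hIH
      refine (hext _ _ _ ?_).1 hIH
      intro Y hYsub
      have e1 : (Y ∪ Ct') ∪ Ct = Y ∪ (Ct ∪ Ct') := by
        ext z; simp only [Finset.mem_union]; tauto
      have e2 : Ct' ∪ Ct = Ct ∪ Ct' := Finset.union_comm _ _
      have m1 : r Ct ≤ r (Ct ∪ Ct') := hmono _ _ Finset.subset_union_left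
      have m2 : r (Ct ∪ Ct') ≤ r (Y ∪ (Ct ∪ Ct')) := hmono _ _ Finset.subset_union_right
      dsimp only
      rw [e1, e2]
      omega
    have hnod := hconn G' (fun Y => r (Y ∪ Ct) - r Ct) hmr' hnC hminors
    by_cases hc2 : (G' ∩ G₂).Nonempty
    · by_cases hc1 : (G' ∩ G₁).Nonempty
      · -- both parts nonempty: contradiction with connectivity
        refine hnod ⟨G' ∩ G₁, G' ∩ G₂, ?_, ?_, hc1, hc2, ?_⟩
        · rw [← Finset.inter_union_distrib_left, Finset.inter_eq_left.2 hG'sub]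
        · exact h12.mono Finset.inter_subset_right Finset.inter_subset_right
        · intro Y hY
          have hYG : Y ⊆ G₁ ∪ G₂ := hY.trans hG'sub
          have eA : Y ∩ (G' ∩ G₁) = Y ∩ G₁ := by
            ext z
            simp only [Finset.mem_inter]
            constructor
            · rintro ⟨a, _, b⟩; exact ⟨a, b⟩
            · rintro ⟨a, b⟩; exact ⟨a, hY a, b⟩
          have eB : Y ∩ (G' ∩ G₂) = Y ∩ G₂ := by
            ext z
            simp only [Finset.mem_inter]
            constructor
            · rintro ⟨a, _, b⟩; exact ⟨a, b⟩
            · rintro ⟨a, b⟩; exact ⟨a, hY a, b⟩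
          have hYCt : Y ∪ Ct ⊆ G₁ ∪ G₂ := Finset.union_subset hYG hCt
          have dY := hdecomp (Y ∪ Ct) hYCt
          have dA := hdecomp ((Y ∩ G₁) ∪ Ct)
            (Finset.union_subset ((Finset.inter_subset_left : Y ∩ G₁ ⊆ Y).trans hYG) hCt)
          have dB := hdecomp ((Y ∩ G₂) ∪ Ct)
            (Finset.union_subset ((Finset.inter_subset_left : Y ∩ G₂ ⊆ Y).trans hYG) hCt)
          have dCt := hdecomp Ct hCt
          have eA1 : ((Y ∩ G₁) ∪ Ct) ∩ G₁ = (Y ∪ Ct) ∩ G₁ := by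
            ext z; simp only [Finset.mem_inter, Finset.mem_union]; tauto
          have eA2 : ((Y ∩ G₁) ∪ Ct) ∩ G₂ = Ct ∩ G₂ := by
            ext z
            simp only [Finset.mem_inter, Finset.mem_union]
            constructor
            · rintro ⟨⟨hz, hg1⟩ | hz, hg⟩
              · exact absurd hg (hd12 z hg1)
              · exact ⟨hz, hg⟩
            · rintro ⟨hz, hg⟩; exact ⟨Or.inr hz, hg⟩
          have eB1 : ((Y ∩ G₂) ∪ Ct) ∩ G₂ = (Y ∪ Ct) ∩ G₂ := by
            ext z; simp only [Finset.mem_inter, Finset.mem_union]; tauto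
          have eB2 : ((Y ∩ G₂) ∪ Ct) ∩ G₁ = Ct ∩ G₁ := by
            ext z
            simp only [Finset.mem_inter, Finset.mem_union]
            constructor
            · rintro ⟨⟨hz, hg2⟩ | hz, hg⟩
              · exact absurd hg2 (hd12 z hg)
              · exact ⟨hz, hg⟩
            · rintro ⟨hz, hg⟩; exact ⟨Or.inr hz, hg⟩
          have m1 : r₁ (Ct ∩ G₁) ≤ r₁ ((Y ∪ Ct) ∩ G₁) :=
            hmono₁ _ _ (Finset.inter_subset_inter Finset.subset_union_right (le_refl _))
          have m2 : r₂ (Ct ∩ G₂) ≤ r₂ ((Y ∪ Ct) ∩ G₂) :=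
            hmono₂ _ _ (Finset.inter_subset_inter Finset.subset_union_right (le_refl _))
          rw [eA, eB, dY, dA, dB, dCt, eA1, eA2, eB1, eB2]
          omega
      · -- G' ⊆ G₂
        have hsub2 : G' ⊆ G₂ := by
          intro x hx
          rcases Finset.mem_union.1 (hG'sub hx) with h | h
          · exact absurd ⟨x, Finset.mem_inter.2 ⟨hx, h⟩⟩ hc1
          · exact h
        have hid : (G₂ \ (D ∩ G₂)) \ (Ct ∩ G₂) = (G₂ \ D) \ Ct := by
          ext x
          simp only [Finset.mem_sdiff, Finset.mem_inter, not_and]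
          tauto
        have hgeq : (G₂ \ D) \ Ct = G' := by
          apply Finset.Subset.antisymm
          · intro x hx
            rcases Finset.mem_sdiff.1 hx with ⟨hx1, hxC⟩
            rcases Finset.mem_sdiff.1 hx1 with ⟨hxG, hxD⟩
            exact Finset.mem_sdiff.2 ⟨Finset.mem_sdiff.2 ⟨Finset.mem_union_right _ hxG, hxD⟩, hxC⟩
          · intro x hx
            rcases Finset.mem_sdiff.1 hx with ⟨hx1, hxC⟩
            rcases Finset.mem_sdiff.1 hx1 with ⟨_, hxD⟩
            exact Finset.mem_sdiff.2 ⟨Finset.mem_sdiff.2 ⟨hsub2 hx, hxD⟩, hxC⟩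
        have hCm := hminor G₂ r₂ hC₂ (D ∩ G₂) (Ct ∩ G₂) Finset.inter_subset_right
          Finset.inter_subset_right
          (hDCt.mono Finset.inter_subset_left Finset.inter_subset_left)
        rw [hid, hgeq] at hCm
        refine hnC ((hext G' _ _ ?_).1 hCm)
        intro Y hY
        have hYG2 : Y ⊆ G₂ := hY.trans hsub2
        have hYG : Y ⊆ G₁ ∪ G₂ := hYG2.trans Finset.subset_union_right
        have d1 := hdecomp (Y ∪ Ct) (Finset.union_subset hYG hCt)
        have d2 := hdecomp Ct hCt
        have e1 : (Y ∪ Ct) ∩ G₂ = Y ∪ (Ct ∩ G₂) := by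
          ext z
          simp only [Finset.mem_inter, Finset.mem_union]
          constructor
          · rintro ⟨h | h, hg⟩
            · exact Or.inl h
            · exact Or.inr ⟨h, hg⟩
          · rintro (h | ⟨h, hg⟩)
            · exact ⟨Or.inl h, hYG2 h⟩
            · exact ⟨Or.inr h, hg⟩
        have e2 : (Y ∪ Ct) ∩ G₁ = Ct ∩ G₁ := by
          ext z
          simp only [Finset.mem_inter, Finset.mem_union]
          constructor
          · rintro ⟨h | h, hg⟩
            · exact absurd (hYG2 h) (fun hc => hd12 z hg hc)
            · exact ⟨h, hg⟩
          · rintro ⟨h, hg⟩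
            exact ⟨Or.inr h, hg⟩
        have m1 : r₂ (Ct ∩ G₂) ≤ r₂ (Y ∪ (Ct ∩ G₂)) := hmono₂ _ _ Finset.subset_union_right
        rw [d1, d2, e1, e2]
        omega
    · -- G' ⊆ G₁
      have hsub1 : G' ⊆ G₁ := by
        intro x hx
        rcases Finset.mem_union.1 (hG'sub hx) with h | h
        · exact h
        · exact absurd ⟨x, Finset.mem_inter.2 ⟨hx, h⟩⟩ hc2
      have hid : (G₁ \ (D ∩ G₁)) \ (Ct ∩ G₁) = (G₁ \ D) \ Ct := by
        ext x
        simp only [Finset.mem_sdiff, Finset.mem_inter, not_and]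
        tauto
      have hgeq : (G₁ \ D) \ Ct = G' := by
        apply Finset.Subset.antisymm
        · intro x hx
          rcases Finset.mem_sdiff.1 hx with ⟨hx1, hxC⟩
          rcases Finset.mem_sdiff.1 hx1 with ⟨hxG, hxD⟩
          exact Finset.mem_sdiff.2 ⟨Finset.mem_sdiff.2 ⟨Finset.mem_union_left _ hxG, hxD⟩, hxC⟩
        · intro x hx
          rcases Finset.mem_sdiff.1 hx with ⟨hx1, hxC⟩
          rcases Finset.mem_sdiff.1 hx1 with ⟨_, hxD⟩
          exact Finset.mem_sdiff.2 ⟨Finset.mem_sdiff.2 ⟨hsub1 hx, hxD⟩, hxC⟩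
      have hCm := hminor G₁ r₁ hC₁ (D ∩ G₁) (Ct ∩ G₁) Finset.inter_subset_right
        Finset.inter_subset_right
        (hDCt.mono Finset.inter_subset_left Finset.inter_subset_left)
      rw [hid, hgeq] at hCm
      refine hnC ((hext G' _ _ ?_).1 hCm)
      intro Y hY
      have hYG1 : Y ⊆ G₁ := hY.trans hsub1
      have hYG : Y ⊆ G₁ ∪ G₂ := hYG1.trans Finset.subset_union_left
      have d1 := hdecomp (Y ∪ Ct) (Finset.union_subset hYG hCt)
      have d2 := hdecomp Ct hCt
      have e1 : (Y ∪ Ct) ∩ G₁ = Y ∪ (Ct ∩ G₁) := by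
        ext z
        simp only [Finset.mem_inter, Finset.mem_union]
        constructor
        · rintro ⟨h | h, hg⟩
          · exact Or.inl h
          · exact Or.inr ⟨h, hg⟩
        · rintro (h | ⟨h, hg⟩)
          · exact ⟨Or.inl h, hYG1 h⟩
          · exact ⟨Or.inr h, hg⟩
      have e2 : (Y ∪ Ct) ∩ G₂ = Ct ∩ G₂ := by
        ext z
        simp only [Finset.mem_inter, Finset.mem_union]
        constructor
        · rintro ⟨h | h, hg⟩
          · exact absurd hg (hd12 z (hYG1 h))
          · exact ⟨h, hg⟩
        · rintro ⟨h, hg⟩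
          exact ⟨Or.inr h, hg⟩
      have m1 : r₁ (Ct ∩ G₁) ≤ r₁ (Y ∪ (Ct ∩ G₁)) := hmono₁ _ _ Finset.subset_union_right
      rw [d1, d2, e1, e2]
      omega
  have h0 := key ((G₁ ∪ G₂).card) ∅ ∅ (Finset.empty_subset _) (Finset.empty_subset _)
    (Finset.disjoint_empty_left _) (by simp)
  rw [Finset.sdiff_empty, Finset.sdiff_empty] at h0
  rw [hGu]
  refine (hext _ _ _ ?_).1 h0
  intro Y hY
  have h0r : r ∅ = 0 := hmr.normalized
  simp only [Finset.union_empty, h0r, Nat.sub_zero]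
end

section
/- The k-natural matroid of a direct sum of k-polymatroids is the direct sum of their k-natural matroids: M_{ρ₁⊕ρ₂}^k = M_{ρ₁}^k ⊕ M_{ρ₂}^k. -/
/-- The `k`-natural matroid of a direct sum of `k`-polymatroids is the direct sum of their
`k`-natural matroids: the rank of any subset of `X_{E₁ ∪ E₂}` is the sum of the ranks of
its parts in `M_{ρ₁}^k` and `M_{ρ₂}^k`. -/
theorem natRank_directSum {α β : Type*} [DecidableEq α] [DecidableEq β] (k : ℕ)
    (E₁ E₂ : Finset α) (ρ₁ ρ₂ : Finset α → ℕ)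
    (h₁ : IsPolymatroid E₁ ρ₁) (h₂ : IsPolymatroid E₂ ρ₂) (hE : Disjoint E₁ E₂)
    (hk₁ : ∀ e ∈ E₁, ρ₁ {e} ≤ k) (hk₂ : ∀ e ∈ E₂, ρ₂ {e} ≤ k)
    (X : α → Finset β) (hcard : ∀ e ∈ E₁ ∪ E₂, (X e).card = k)
    (hdisjX : ∀ e ∈ E₁ ∪ E₂, ∀ f ∈ E₁ ∪ E₂, e ≠ f → Disjoint (X e) (X f)) :
    ∀ Y ⊆ (E₁ ∪ E₂).biUnion X,
      natRank (E₁ ∪ E₂) (fun A => ρ₁ (A ∩ E₁) + ρ₂ (A ∩ E₂)) X Y =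
        natRank E₁ ρ₁ X (Y ∩ E₁.biUnion X) + natRank E₂ ρ₂ X (Y ∩ E₂.biUnion X) := by
  classical
  intro Y hY
  -- the X-images of E₁ and E₂ are disjoint
  have hX12 : Disjoint (E₁.biUnion X) (E₂.biUnion X) := by
    rw [Finset.disjoint_biUnion_left]
    intro e he
    rw [Finset.disjoint_biUnion_right]
    intro f hf
    exact hdisjX e (Finset.mem_union_left _ he) f (Finset.mem_union_right _ hf)
      (fun h => Finset.disjoint_left.mp hE he (h ▸ hf))
  -- biUnion over subsets
  have hsub : ∀ {A B : Finset α}, A ⊆ B → A.biUnion X ⊆ B.biUnion X := by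
    intro A B hAB
    exact Finset.biUnion_subset_biUnion_of_subset_left X hAB
  have hbU : ∀ s t : Finset α, (s ∪ t).biUnion X = s.biUnion X ∪ t.biUnion X := by
    intro s t
    ext x
    simp [Finset.mem_biUnion, Finset.mem_union, or_and_right, exists_or]
  -- key cardinality split
  have key : ∀ A₁ ⊆ E₁, ∀ A₂ ⊆ E₂,
      (Y \ (A₁ ∪ A₂).biUnion X).card =
        ((Y ∩ E₁.biUnion X) \ A₁.biUnion X).card +
        ((Y ∩ E₂.biUnion X) \ A₂.biUnion X).card := by
    intro A₁ hA₁ A₂ hA₂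
    have heq : Y \ (A₁ ∪ A₂).biUnion X =
        ((Y ∩ E₁.biUnion X) \ A₁.biUnion X) ∪ ((Y ∩ E₂.biUnion X) \ A₂.biUnion X) := by
      ext x
      simp only [Finset.mem_sdiff, Finset.mem_union, Finset.mem_inter, hbU]
      constructor
      · rintro ⟨hxY, hx⟩
        push_neg at hx
        have hxE : x ∈ E₁.biUnion X ∪ E₂.biUnion X := by
          have := hY hxY
          rwa [hbU] at this
        rcases Finset.mem_union.mp hxE with h | h
        · exact Or.inl ⟨⟨hxY, h⟩, hx.1⟩
        · exact Or.inr ⟨⟨hxY, h⟩, hx.2⟩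
      · rintro (⟨⟨hxY, hB⟩, hx⟩ | ⟨⟨hxY, hB⟩, hx⟩)
        · refine ⟨hxY, ?_⟩
          push_neg
          exact ⟨hx, fun h => Finset.disjoint_left.mp hX12 hB (hsub hA₂ h)⟩
        · refine ⟨hxY, ?_⟩
          push_neg
          exact ⟨fun h => Finset.disjoint_right.mp hX12 hB (hsub hA₁ h), hx⟩
    rw [heq, Finset.card_union_of_disjoint]
    exact Finset.disjoint_of_subset_left (Finset.sdiff_subset.trans Finset.inter_subset_right)
      (Finset.disjoint_of_subset_right (Finset.sdiff_subset.trans Finset.inter_subset_right) hX12)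
  apply le_antisymm
  · -- LHS ≤ RHS: pick optimal A₁, A₂
    obtain ⟨A₁, hA₁mem, hA₁⟩ := Finset.mem_image.mp
      (Finset.min'_mem (E₁.powerset.image fun A => ρ₁ A + ((Y ∩ E₁.biUnion X) \ A.biUnion X).card)
        ((E₁.powerset_nonempty).image _))
    obtain ⟨A₂, hA₂mem, hA₂⟩ := Finset.mem_image.mp
      (Finset.min'_mem (E₂.powerset.image fun A => ρ₂ A + ((Y ∩ E₂.biUnion X) \ A.biUnion X).card)
        ((E₂.powerset_nonempty).image _))
    rw [Finset.mem_powerset] at hA₁mem hA₂mem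
    have hmem : (ρ₁ ((A₁ ∪ A₂) ∩ E₁) + ρ₂ ((A₁ ∪ A₂) ∩ E₂)) +
        (Y \ (A₁ ∪ A₂).biUnion X).card ∈
        ((E₁ ∪ E₂).powerset.image fun A =>
          (ρ₁ (A ∩ E₁) + ρ₂ (A ∩ E₂)) + (Y \ A.biUnion X).card) := by
      exact Finset.mem_image_of_mem _ (Finset.mem_powerset.mpr
        (Finset.union_subset_union hA₁mem hA₂mem))
    have hI1 : (A₁ ∪ A₂) ∩ E₁ = A₁ := by
      rw [Finset.union_inter_distrib_right,
        Finset.inter_eq_left.mpr hA₁mem,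
        Finset.disjoint_iff_inter_eq_empty.mp (Finset.disjoint_of_subset_left hA₂mem hE.symm), Finset.union_empty]
    have hI2 : (A₁ ∪ A₂) ∩ E₂ = A₂ := by
      rw [Finset.union_inter_distrib_right,
        Finset.inter_eq_left.mpr hA₂mem,
        Finset.disjoint_iff_inter_eq_empty.mp (Finset.disjoint_of_subset_left hA₁mem hE), Finset.empty_union]
    calc natRank (E₁ ∪ E₂) (fun A => ρ₁ (A ∩ E₁) + ρ₂ (A ∩ E₂)) X Y
        ≤ (ρ₁ ((A₁ ∪ A₂) ∩ E₁) + ρ₂ ((A₁ ∪ A₂) ∩ E₂)) + (Y \ (A₁ ∪ A₂).biUnion X).card :=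
          Finset.min'_le _ _ hmem
      _ = natRank E₁ ρ₁ X (Y ∩ E₁.biUnion X) + natRank E₂ ρ₂ X (Y ∩ E₂.biUnion X) := by
          rw [hI1, hI2, key A₁ hA₁mem A₂ hA₂mem]
          unfold natRank
          rw [← hA₁, ← hA₂]
          ring
  · -- RHS ≤ LHS: split the optimal A
    obtain ⟨A, hAmem, hA⟩ := Finset.mem_image.mp
      (Finset.min'_mem ((E₁ ∪ E₂).powerset.image fun A =>
          (ρ₁ (A ∩ E₁) + ρ₂ (A ∩ E₂)) + (Y \ A.biUnion X).card)
        (((E₁ ∪ E₂).powerset_nonempty).image _))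
    rw [Finset.mem_powerset] at hAmem
    have hAsplit : (A ∩ E₁) ∪ (A ∩ E₂) = A := by
      rw [← Finset.inter_union_distrib_left, Finset.inter_eq_left.mpr hAmem]
    have h1 : natRank E₁ ρ₁ X (Y ∩ E₁.biUnion X) ≤
        ρ₁ (A ∩ E₁) + ((Y ∩ E₁.biUnion X) \ (A ∩ E₁).biUnion X).card :=
      Finset.min'_le _ _ (Finset.mem_image_of_mem _
        (Finset.mem_powerset.mpr Finset.inter_subset_right))
    have h2 : natRank E₂ ρ₂ X (Y ∩ E₂.biUnion X) ≤
        ρ₂ (A ∩ E₂) + ((Y ∩ E₂.biUnion X) \ (A ∩ E₂).biUnion X).card :=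
      Finset.min'_le _ _ (Finset.mem_image_of_mem _
        (Finset.mem_powerset.mpr Finset.inter_subset_right))
    have hc : (Y \ A.biUnion X).card =
        ((Y ∩ E₁.biUnion X) \ (A ∩ E₁).biUnion X).card +
        ((Y ∩ E₂.biUnion X) \ (A ∩ E₂).biUnion X).card := by
      conv_lhs => rw [← hAsplit]
      exact key _ Finset.inter_subset_right _ Finset.inter_subset_right
    calc natRank E₁ ρ₁ X (Y ∩ E₁.biUnion X) + natRank E₂ ρ₂ X (Y ∩ E₂.biUnion X)
        ≤ (ρ₁ (A ∩ E₁) + ((Y ∩ E₁.biUnion X) \ (A ∩ E₁).biUnion X).card) +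
          (ρ₂ (A ∩ E₂) + ((Y ∩ E₂.biUnion X) \ (A ∩ E₂).biUnion X).card) :=
          Nat.add_le_add h1 h2
      _ = (ρ₁ (A ∩ E₁) + ρ₂ (A ∩ E₂)) + (Y \ A.biUnion X).card := by rw [hc]; ring
      _ = natRank (E₁ ∪ E₂) (fun A => ρ₁ (A ∩ E₁) + ρ₂ (A ∩ E₂)) X Y := hA
end
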